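/- arXiv:2306.13892 — 5 statements merged into one kernel-verified Lean document; each statement's English description precedes it below -/
import Mathlib

section
/- Let E and F be real normed vector spaces, M : E → F a map that is Lipschitz with constant K ≥ 0, θ* ∈ E, T : E → E an update map, and ρ ∈ (0,1) a contraction factor such that ‖M(T θ) − M(θ*)‖ ≤ ρ ‖M(θ) − M(θ*)‖ for every θ ∈ E. Let η : ℕ → ℝ≥0, C_σ ≥ 0, ξ : ℕ → E, and define sequences θ, θ̃ : ℕ → E by θ̃^(k) = θ^(k) + η^(k) · C_σ · ξ^(k) and θ^(k+1) = T(θ̃^(k)), with θ^(0) given. Then for every k ≥ 0, ‖M(θ̃^(k)) − M(θ*)‖ ≤ ρ^k · ‖M(θ^(0)) − M(θ*)‖ + K · C_σ · Σ_{i=0}^{k} ρ^{k−i} · η^(i) · ‖ξ^(i)‖. -/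
open Finset

/-- Lemma 1: for the differentially private decentralized algorithm with `K`-Lipschitz
function of interest `M`, contraction factor `ρ ∈ (0,1)` for the base update `T`, and
noisy iterates `θ̃ k = θ k + (η k * Cσ) • ξ k`, `θ (k+1) = T (θ̃ k)`, one has
`‖M (θ̃ k) − M θ*‖ ≤ ρ^k ‖M (θ 0) − M θ*‖ + K Cσ ∑_{i=0}^{k} ρ^{k−i} η i ‖ξ i‖`. -/
theorem dp_lemma_noise_accumulation
    {E F : Type*} [NormedAddCommGroup E] [NormedSpace ℝ E]
    [NormedAddCommGroup F] [NormedSpace ℝ F]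
    (M : E → F) (K : ℝ) (hK : 0 ≤ K)
    (hM : ∀ x y : E, ‖M x - M y‖ ≤ K * ‖x - y‖)
    (θstar : E) (T : E → E) (ρ : ℝ) (hρ0 : 0 < ρ) (hρ1 : ρ < 1)
    (hT : ∀ θ : E, ‖M (T θ) - M θstar‖ ≤ ρ * ‖M θ - M θstar‖)
    (η : ℕ → ℝ) (hη : ∀ k, 0 ≤ η k) (Cσ : ℝ) (hCσ : 0 ≤ Cσ)
    (ξ : ℕ → E) (θ θt : ℕ → E)
    (hnoisy : ∀ k, θt k = θ k + (η k * Cσ) • ξ k)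
    (hupdate : ∀ k, θ (k + 1) = T (θt k)) :
    ∀ k : ℕ,
      ‖M (θt k) - M θstar‖ ≤
        ρ ^ k * ‖M (θ 0) - M θstar‖ +
          K * Cσ * ∑ i ∈ Finset.range (k + 1), ρ ^ (k - i) * η i * ‖ξ i‖ := by
  have key : ∀ k, ‖M (θt k) - M θstar‖ ≤
      ‖M (θ k) - M θstar‖ + K * Cσ * (η k * ‖ξ k‖) := by
    intro k
    have h1 : ‖M (θt k) - M θstar‖ ≤ ‖M (θt k) - M (θ k)‖ + ‖M (θ k) - M θstar‖ :=
      norm_sub_le_norm_sub_add_norm_sub _ _ _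
    have h2 : ‖M (θt k) - M (θ k)‖ ≤ K * Cσ * (η k * ‖ξ k‖) := by
      calc ‖M (θt k) - M (θ k)‖ ≤ K * ‖θt k - θ k‖ := hM _ _
        _ = K * (η k * Cσ * ‖ξ k‖) := by
            rw [hnoisy k]
            simp only [add_sub_cancel_left, norm_smul, Real.norm_eq_abs,
              abs_of_nonneg (mul_nonneg (hη k) hCσ)]
        _ = K * Cσ * (η k * ‖ξ k‖) := by ring
    linarith
  intro k
  induction k with
  | zero =>
      have := key 0
      simpa using this
  | succ k ih =>
      have hstep : ‖M (θ (k + 1)) - M θstar‖ ≤ ρ * ‖M (θt k) - M θstar‖ := by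
        rw [hupdate k]; exact hT _
      have h1 := key (k + 1)
      have h2 : ρ * ‖M (θt k) - M θstar‖ ≤
          ρ * (ρ ^ k * ‖M (θ 0) - M θstar‖ +
            K * Cσ * ∑ i ∈ Finset.range (k + 1), ρ ^ (k - i) * η i * ‖ξ i‖) :=
        mul_le_mul_of_nonneg_left ih hρ0.le
      have hsum : ∑ i ∈ Finset.range (k + 2), ρ ^ (k + 1 - i) * η i * ‖ξ i‖ =
          ρ * ∑ i ∈ Finset.range (k + 1), ρ ^ (k - i) * η i * ‖ξ i‖
            + η (k + 1) * ‖ξ (k + 1)‖ := by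
        rw [Finset.sum_range_succ, Finset.mul_sum]
        congr 1
        · refine Finset.sum_congr rfl fun i hi => ?_
          have hik : i ≤ k := Nat.lt_succ_iff.mp (Finset.mem_range.mp hi)
          have : k + 1 - i = (k - i) + 1 := by omega
          rw [this, pow_succ]; ring
        · simp
      rw [hsum]
      calc ‖M (θt (k + 1)) - M θstar‖
          ≤ ‖M (θ (k + 1)) - M θstar‖ + K * Cσ * (η (k + 1) * ‖ξ (k + 1)‖) := h1
        _ ≤ ρ * (ρ ^ k * ‖M (θ 0) - M θstar‖ +
              K * Cσ * ∑ i ∈ Finset.range (k + 1), ρ ^ (k - i) * η i * ‖ξ i‖)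
              + K * Cσ * (η (k + 1) * ‖ξ (k + 1)‖) := by linarith
        _ = ρ ^ (k + 1) * ‖M (θ 0) - M θstar‖ +
              K * Cσ * (ρ * ∑ i ∈ Finset.range (k + 1), ρ ^ (k - i) * η i * ‖ξ i‖
                + η (k + 1) * ‖ξ (k + 1)‖) := by ring
end

section
/- Let E and F be real normed vector spaces, M : E → F a map that is Lipschitz with constant K ≥ 0, θ* ∈ E, T : E → E an update map, and ρ ∈ (0,1) a contraction factor such that ‖M(T θ) − M(θ*)‖ ≤ ρ ‖M(θ) − M(θ*)‖ for every θ ∈ E. Let η : ℕ → ℝ≥0 with η^(k) ≤ C_η for all k, C_σ ≥ 0, ξ : ℕ → E with ‖ξ^(k)‖ ≤ D for all k, and define sequences θ, θ̃ : ℕ → E by θ̃^(k) = θ^(k) + η^(k) · C_σ · ξ^(k) and θ^(k+1) = T(θ̃^(k)), with θ^(0) given. Then for every k ≥ 0, ‖M(θ̃^(k)) − M(θ*)‖ ≤ ρ^k · ‖M(θ^(0)) − M(θ*)‖ + (K · C_σ · C_η · D) / (1 − ρ). -/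
/-- Deterministic convergence theorem: with learning rates bounded by `Cη` and noise
magnitudes bounded by `D`, the noisy iterates satisfy
`‖M (θ̃ k) − M θ*‖ ≤ ρ^k ‖M (θ 0) − M θ*‖ + K Cσ Cη D / (1 − ρ)`. -/
theorem dp_convergence_deterministic
    {E F : Type*} [NormedAddCommGroup E] [NormedSpace ℝ E]
    [NormedAddCommGroup F] [NormedSpace ℝ F]
    (M : E → F) (K : ℝ) (hK : 0 ≤ K)
    (hM : ∀ x y : E, ‖M x - M y‖ ≤ K * ‖x - y‖)
    (θstar : E) (T : E → E) (ρ : ℝ) (hρ0 : 0 < ρ) (hρ1 : ρ < 1)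
    (hT : ∀ θ : E, ‖M (T θ) - M θstar‖ ≤ ρ * ‖M θ - M θstar‖)
    (η : ℕ → ℝ) (hη : ∀ k, 0 ≤ η k) (Cη : ℝ) (hηC : ∀ k, η k ≤ Cη)
    (Cσ : ℝ) (hCσ : 0 ≤ Cσ)
    (ξ : ℕ → E) (D : ℝ) (hξ : ∀ k, ‖ξ k‖ ≤ D)
    (θ θt : ℕ → E)
    (hnoisy : ∀ k, θt k = θ k + (η k * Cσ) • ξ k)
    (hupdate : ∀ k, θ (k + 1) = T (θt k)) :
    ∀ k : ℕ,
      ‖M (θt k) - M θstar‖ ≤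
        ρ ^ k * ‖M (θ 0) - M θstar‖ + K * Cσ * Cη * D / (1 - ρ) := by
  have hD : 0 ≤ D := le_trans (norm_nonneg _) (hξ 0)
  have hCη : 0 ≤ Cη := le_trans (hη 0) (hηC 0)
  set c := K * Cσ * Cη * D with hc
  have hc0 : 0 ≤ c := by positivity
  have h1ρ : 0 < 1 - ρ := by linarith
  -- step bound
  have hstep : ∀ k, ‖M (θt k) - M θstar‖ ≤ ‖M (θ k) - M θstar‖ + c := by
    intro k
    have h1 : ‖M (θt k) - M θstar‖ ≤ ‖M (θt k) - M (θ k)‖ + ‖M (θ k) - M θstar‖ := by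
      have : M (θt k) - M θstar = (M (θt k) - M (θ k)) + (M (θ k) - M θstar) := by abel
      rw [this]; exact norm_add_le _ _
    have h2 : ‖M (θt k) - M (θ k)‖ ≤ c := by
      have h3 := hM (θt k) (θ k)
      have h4 : ‖θt k - θ k‖ = (η k * Cσ) * ‖ξ k‖ := by
        rw [hnoisy k]
        simp only [add_sub_cancel_left, norm_smul, Real.norm_eq_abs,
          abs_of_nonneg (mul_nonneg (hη k) hCσ)]
      have h5 : (η k * Cσ) * ‖ξ k‖ ≤ Cη * Cσ * D := by
        nlinarith [mul_nonneg (mul_nonneg (sub_nonneg.2 (hηC k)) hCσ) (norm_nonneg (ξ k)),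
          mul_nonneg (mul_nonneg hCη hCσ) (sub_nonneg.2 (hξ k)), hη k, hξ k]
      rw [hc]
      calc ‖M (θt k) - M (θ k)‖ ≤ K * ‖θt k - θ k‖ := h3
        _ = K * ((η k * Cσ) * ‖ξ k‖) := by rw [h4]
        _ ≤ K * (Cη * Cσ * D) := by nlinarith
        _ = K * Cσ * Cη * D := by ring
    linarith
  -- main induction with partial geometric sums
  have main : ∀ k, ‖M (θt k) - M θstar‖ ≤
      ρ ^ k * ‖M (θ 0) - M θstar‖ + c * ∑ i ∈ Finset.range (k + 1), ρ ^ i := by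
    intro k
    induction k with
    | zero => simpa using hstep 0
    | succ n ih =>
      have hb := hstep (n + 1)
      have ha : ‖M (θ (n + 1)) - M θstar‖ ≤ ρ * ‖M (θt n) - M θstar‖ := by
        rw [hupdate n]; exact hT (θt n)
      have hS : ∑ i ∈ Finset.range (n + 2), ρ ^ i
          = ρ * ∑ i ∈ Finset.range (n + 1), ρ ^ i + 1 := by
        rw [geom_sum_succ]
      calc ‖M (θt (n + 1)) - M θstar‖
          ≤ ‖M (θ (n + 1)) - M θstar‖ + c := hb
        _ ≤ ρ * ‖M (θt n) - M θstar‖ + c := by linarith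
        _ ≤ ρ * (ρ ^ n * ‖M (θ 0) - M θstar‖ + c * ∑ i ∈ Finset.range (n + 1), ρ ^ i) + c := by
            nlinarith [ih]
        _ = ρ ^ (n + 1) * ‖M (θ 0) - M θstar‖
            + c * ∑ i ∈ Finset.range (n + 2), ρ ^ i := by rw [hS]; ring
  intro k
  have hgeom : ∑ i ∈ Finset.range (k + 1), ρ ^ i ≤ 1 / (1 - ρ) := by
    rw [geom_sum_eq (ne_of_lt hρ1) (k + 1),
      show (ρ ^ (k + 1) - 1) / (ρ - 1) = (1 - ρ ^ (k + 1)) / (1 - ρ) from by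
        rw [div_eq_div_iff (by linarith) (by linarith)]; ring]
    gcongr
    nlinarith [pow_nonneg hρ0.le (k + 1)]
  have := main k
  have hmul : c * ∑ i ∈ Finset.range (k + 1), ρ ^ i ≤ c / (1 - ρ) := by
    calc c * ∑ i ∈ Finset.range (k + 1), ρ ^ i ≤ c * (1 / (1 - ρ)) :=
          mul_le_mul_of_nonneg_left hgeom hc0
      _ = c / (1 - ρ) := by ring
  linarith
end

section
/- Let (Ω, 𝓕, ℙ) be a probability space, E and F real normed vector spaces, M : E → F a map that is Lipschitz with constant K ≥ 0, θ* ∈ E, T : E → E an update map, and ρ ∈ (0,1) a contraction factor such that ‖M(T θ) − M(θ*)‖ ≤ ρ ‖M(θ) − M(θ*)‖ for every θ ∈ E. Let η : ℕ → ℝ≥0 with η^(k) ≤ C_η for all k, C_σ ≥ 0, and let ξ^(k) : Ω → E be random variables with 𝔼[‖ξ^(k)‖] ≤ D for all k. Define random sequences θ̃^(k) = θ^(k) + η^(k) · C_σ · ξ^(k) and θ^(k+1) = T(θ̃^(k)), with θ^(0) ∈ E deterministic. Then for every k ≥ 0 (assuming the relevant norms are integrable), 𝔼[‖M(θ̃^(k))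 − M(θ*)‖] ≤ ρ^k · ‖M(θ^(0)) − M(θ*)‖ + (K · C_σ · C_η · D) / (1 − ρ). -/
open MeasureTheory

/-- Probabilistic convergence bound (inequality (19)): taking expectations of Lemma 1
with `𝔼[‖ξ k‖] ≤ D` and `η k ≤ Cη`, the expected deviation of `M` at the noisy iterate
from the optimum satisfies
`𝔼[‖M (θ̃ k) − M θ*‖] ≤ ρ^k ‖M (θ 0) − M θ*‖ + K Cσ Cη D / (1 − ρ)`. -/
theorem dp_convergence_in_expectation
    {Ω : Type*} [MeasureSpace Ω] [IsProbabilityMeasure (volume : Measure Ω)]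
    {E F : Type*} [NormedAddCommGroup E] [NormedSpace ℝ E]
    [NormedAddCommGroup F] [NormedSpace ℝ F]
    (M : E → F) (K : ℝ) (hK : 0 ≤ K)
    (hM : ∀ x y : E, ‖M x - M y‖ ≤ K * ‖x - y‖)
    (θstar : E) (T : E → E) (ρ : ℝ) (hρ0 : 0 < ρ) (hρ1 : ρ < 1)
    (hT : ∀ θ : E, ‖M (T θ) - M θstar‖ ≤ ρ * ‖M θ - M θstar‖)
    (η : ℕ → ℝ) (hη : ∀ k, 0 ≤ η k) (Cη : ℝ) (hηC : ∀ k, η k ≤ Cη)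
    (Cσ : ℝ) (hCσ : 0 ≤ Cσ)
    (ξ : ℕ → Ω → E)
    (hξint : ∀ k, Integrable (fun ω => ‖ξ k ω‖))
    (D : ℝ) (hξ : ∀ k, (∫ ω, ‖ξ k ω‖) ≤ D)
    (θ0 : E) (θ θt : ℕ → Ω → E)
    (hθ0 : ∀ ω, θ 0 ω = θ0)
    (hnoisy : ∀ k ω, θt k ω = θ k ω + (η k * Cσ) • ξ k ω)
    (hupdate : ∀ k ω, θ (k + 1) ω = T (θt k ω))
    (hint : ∀ k, Integrable (fun ω => ‖M (θt k ω) - M θstar‖)) :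
    ∀ k : ℕ,
      (∫ ω, ‖M (θt k ω) - M θstar‖) ≤
        ρ ^ k * ‖M θ0 - M θstar‖ + K * Cσ * Cη * D / (1 - ρ) := by

  have hρ' : (0:ℝ) < 1 - ρ := by linarith
  have hD : 0 ≤ D := le_trans (integral_nonneg fun ω => norm_nonneg _) (hξ 0)
  have hCη : 0 ≤ Cη := le_trans (hη 0) (hηC 0)
  have hB0 : 0 ≤ K * Cσ * Cη * D := by positivity
  have key : ∀ k ω, ‖M (θt k ω) - M θstar‖ ≤
      ‖M (θ k ω) - M θstar‖ + K * Cσ * Cη * ‖ξ k ω‖ := by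
    intro k ω
    have h1 : ‖M (θt k ω) - M θstar‖ ≤
        ‖M (θ k ω) - M θstar‖ + ‖M (θt k ω) - M (θ k ω)‖ := by
      have h := norm_add_le (M (θ k ω) - M θstar) (M (θt k ω) - M (θ k ω))
      have he : (M (θ k ω) - M θstar) + (M (θt k ω) - M (θ k ω))
          = M (θt k ω) - M θstar := by abel
      rwa [he] at h
    have h2 : ‖M (θt k ω) - M (θ k ω)‖ ≤ K * (η k * Cσ) * ‖ξ k ω‖ := by
      have := hM (θt k ω) (θ k ω)
      have hd : θt k ω - θ k ω = (η k * Cσ) • ξ k ω := by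
        rw [hnoisy k ω]; abel
      rw [hd, norm_smul, Real.norm_eq_abs, abs_of_nonneg (mul_nonneg (hη k) hCσ)] at this
      linarith [this]
    have h3 : K * (η k * Cσ) * ‖ξ k ω‖ ≤ K * Cσ * Cη * ‖ξ k ω‖ := by
      have hc : K * (η k * Cσ) ≤ K * Cσ * Cη := by
        nlinarith [mul_nonneg (mul_nonneg hK hCσ) (sub_nonneg.mpr (hηC k))]
      exact mul_le_mul_of_nonneg_right hc (norm_nonneg _)
    linarith
  have hintK : ∀ k, Integrable (fun ω => K * Cσ * Cη * ‖ξ k ω‖) :=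
    fun k => (hξint k).const_mul _
  have hKbound : ∀ k, (∫ ω, K * Cσ * Cη * ‖ξ k ω‖) ≤ K * Cσ * Cη * D := by
    intro k
    rw [integral_const_mul]
    exact mul_le_mul_of_nonneg_left (hξ k) (by positivity)
  have base : (∫ ω, ‖M (θt 0 ω) - M θstar‖) ≤
      ‖M θ0 - M θstar‖ + K * Cσ * Cη * D := by
    have hptw : ∀ ω, ‖M (θt 0 ω) - M θstar‖ ≤
        ‖M θ0 - M θstar‖ + K * Cσ * Cη * ‖ξ 0 ω‖ := by
      intro ω
      have := key 0 ω
      rwa [hθ0 ω] at this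
    calc (∫ ω, ‖M (θt 0 ω) - M θstar‖)
        ≤ ∫ ω, (‖M θ0 - M θstar‖ + K * Cσ * Cη * ‖ξ 0 ω‖) :=
          integral_mono (hint 0) ((integrable_const _).add (hintK 0)) hptw
      _ = ‖M θ0 - M θstar‖ + ∫ ω, K * Cσ * Cη * ‖ξ 0 ω‖ := by
          rw [integral_add (integrable_const _) (hintK 0), integral_const]
          simp
      _ ≤ ‖M θ0 - M θstar‖ + K * Cσ * Cη * D := by linarith [hKbound 0]
  have step : ∀ k, (∫ ω, ‖M (θt (k+1) ω) - M θstar‖) ≤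
      ρ * (∫ ω, ‖M (θt k ω) - M θstar‖) + K * Cσ * Cη * D := by
    intro k
    have hptw : ∀ ω, ‖M (θt (k+1) ω) - M θstar‖ ≤
        ρ * ‖M (θt k ω) - M θstar‖ + K * Cσ * Cη * ‖ξ (k+1) ω‖ := by
      intro ω
      have h1 := key (k+1) ω
      have h2 : ‖M (θ (k+1) ω) - M θstar‖ ≤ ρ * ‖M (θt k ω) - M θstar‖ := by
        rw [hupdate k ω]; exact hT _
      linarith
    calc (∫ ω, ‖M (θt (k+1) ω) - M θstar‖)
        ≤ ∫ ω, (ρ * ‖M (θt k ω) - M θstar‖ + K * Cσ * Cη * ‖ξ (k+1) ω‖) :=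
          integral_mono (hint (k+1)) (((hint k).const_mul ρ).add (hintK (k+1))) hptw
      _ = ρ * (∫ ω, ‖M (θt k ω) - M θstar‖) + ∫ ω, K * Cσ * Cη * ‖ξ (k+1) ω‖ := by
          rw [integral_add ((hint k).const_mul ρ) (hintK (k+1)), integral_const_mul]
      _ ≤ _ := by linarith [hKbound (k+1)]
  intro k
  induction k with
  | zero =>
    have h : K * Cσ * Cη * D ≤ K * Cσ * Cη * D / (1 - ρ) := by
      rw [le_div_iff₀ hρ']
      nlinarith
    simpa using base.trans (by linarith)
  | succ k ih =>
    have h := step k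
    have hmul := mul_le_mul_of_nonneg_left ih (le_of_lt hρ0)
    have heq : ρ * (K * Cσ * Cη * D / (1 - ρ)) + K * Cσ * Cη * D
        = K * Cσ * Cη * D / (1 - ρ) := by
      field_simp
      ring
    have : (∫ ω, ‖M (θt (k+1) ω) - M θstar‖) ≤
        ρ * (ρ ^ k * ‖M θ0 - M θstar‖) + K * Cσ * Cη * D / (1 - ρ) := by
      nlinarith [hmul]
    calc (∫ ω, ‖M (θt (k+1) ω) - M θstar‖)
        ≤ ρ * (ρ ^ k * ‖M θ0 - M θstar‖) + K * Cσ * Cη * D / (1 - ρ) := this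
      _ = ρ ^ (k+1) * ‖M θ0 - M θstar‖ + K * Cσ * Cη * D / (1 - ρ) := by ring
end

section
/- Let (Ω, 𝓕, ℙ) be a probability space, E and F real normed vector spaces, M : E → F a map that is Lipschitz with constant K ≥ 0, θ* ∈ E, T : E → E an update map, and ρ ∈ (0,1) a contraction factor such that ‖M(T θ) − M(θ*)‖ ≤ ρ ‖M(θ) − M(θ*)‖ for every θ ∈ E. Let η : ℕ → ℝ≥0 with η^(k) ≤ C_η for all k, C_σ ≥ 0, and let ξ^(k) : Ω → E be random variables with 𝔼[‖ξ^(k)‖] ≤ D for all k. Define random sequences θ̃^(k) = θ^(k) + η^(k) · C_σ · ξ^(k) and θ^(k+1) = T(θ̃^(k)), with θ^(0) ∈ E deterministic. Then (assuming the relevant norms are integrable) limsup_{k→∞} 𝔼[‖M(θ̃^(k)) − M(θ*)‖] ≤ (K · C_σ · C_η · D) / (1 − ρ). -/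
open MeasureTheory Filter

/-- Asymptotic conclusion (inequality (20)) of the Convergence Theorem:
`limsup_{k→∞} 𝔼[‖M (θ̃ k) − M θ*‖] ≤ K Cσ Cη D / (1 − ρ)`. -/
theorem dp_convergence_limsup
    {Ω : Type*} [MeasureSpace Ω] [IsProbabilityMeasure (volume : Measure Ω)]
    {E F : Type*} [NormedAddCommGroup E] [NormedSpace ℝ E]
    [NormedAddCommGroup F] [NormedSpace ℝ F]
    (M : E → F) (K : ℝ) (hK : 0 ≤ K)
    (hM : ∀ x y : E, ‖M x - M y‖ ≤ K * ‖x - y‖)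
    (θstar : E) (T : E → E) (ρ : ℝ) (hρ0 : 0 < ρ) (hρ1 : ρ < 1)
    (hT : ∀ θ : E, ‖M (T θ) - M θstar‖ ≤ ρ * ‖M θ - M θstar‖)
    (η : ℕ → ℝ) (hη : ∀ k, 0 ≤ η k) (Cη : ℝ) (hηC : ∀ k, η k ≤ Cη)
    (Cσ : ℝ) (hCσ : 0 ≤ Cσ)
    (ξ : ℕ → Ω → E)
    (hξint : ∀ k, Integrable (fun ω => ‖ξ k ω‖))
    (D : ℝ) (hξ : ∀ k, (∫ ω, ‖ξ k ω‖) ≤ D)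
    (θ0 : E) (θ θt : ℕ → Ω → E)
    (hθ0 : ∀ ω, θ 0 ω = θ0)
    (hnoisy : ∀ k ω, θt k ω = θ k ω + (η k * Cσ) • ξ k ω)
    (hupdate : ∀ k ω, θ (k + 1) ω = T (θt k ω))
    (hint : ∀ k, Integrable (fun ω => ‖M (θt k ω) - M θstar‖)) :
    Filter.limsup (fun k : ℕ => ∫ ω, ‖M (θt k ω) - M θstar‖) atTop ≤
      K * Cσ * Cη * D / (1 - ρ) := by
  set a : ℕ → ℝ := fun k => ∫ ω, ‖M (θt k ω) - M θstar‖ with ha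
  have hCη : 0 ≤ Cη := le_trans (hη 0) (hηC 0)
  have hD : 0 ≤ D := le_trans (integral_nonneg fun ω => norm_nonneg _) (hξ 0)
  set C : ℝ := K * Cσ * Cη * D with hC
  have hC0 : 0 ≤ C := by positivity
  have hρpos : 0 < 1 - ρ := by linarith
  have hanneg : ∀ k, 0 ≤ a k := fun k => integral_nonneg fun ω => norm_nonneg _
  -- pointwise key estimate
  have hpt : ∀ k ω, ‖M (θt (k+1) ω) - M θstar‖ ≤
      ρ * ‖M (θt k ω) - M θstar‖ + K * Cη * Cσ * ‖ξ (k+1) ω‖ := by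
    intro k ω
    have h1 : ‖M (θt (k+1) ω) - M θstar‖ ≤
        ‖M (θ (k+1) ω) - M θstar‖ + ‖M (θt (k+1) ω) - M (θ (k+1) ω)‖ := by
      have : M (θt (k+1) ω) - M θstar =
          (M (θ (k+1) ω) - M θstar) + (M (θt (k+1) ω) - M (θ (k+1) ω)) := by abel
      rw [this]; exact norm_add_le _ _
    have h2 : ‖M (θ (k+1) ω) - M θstar‖ ≤ ρ * ‖M (θt k ω) - M θstar‖ := by
      rw [hupdate k ω]; exact hT _
    have h3 : ‖M (θt (k+1) ω) - M (θ (k+1) ω)‖ ≤ K * Cη * Cσ * ‖ξ (k+1) ω‖ := by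
      calc ‖M (θt (k+1) ω) - M (θ (k+1) ω)‖
          ≤ K * ‖θt (k+1) ω - θ (k+1) ω‖ := hM _ _
        _ = K * ((η (k+1) * Cσ) * ‖ξ (k+1) ω‖) := by
            have hd : θt (k+1) ω - θ (k+1) ω = (η (k+1) * Cσ) • ξ (k+1) ω := by
              rw [hnoisy (k+1) ω]; abel
            rw [hd, norm_smul, Real.norm_eq_abs,
              abs_of_nonneg (mul_nonneg (hη (k+1)) hCσ)]
        _ ≤ K * Cη * Cσ * ‖ξ (k+1) ω‖ := by
            nlinarith [mul_nonneg (mul_nonneg hK hCσ) (norm_nonneg (ξ (k+1) ω)),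
              hηC (k+1), hη (k+1)]
    linarith
  -- recursion on expectations
  have hrec : ∀ k, a (k+1) ≤ ρ * a k + C := by
    intro k
    have hgi : Integrable (fun ω => ρ * ‖M (θt k ω) - M θstar‖
        + K * Cη * Cσ * ‖ξ (k+1) ω‖) :=
      ((hint k).const_mul ρ).add ((hξint (k+1)).const_mul _)
    have h1 : a (k+1) ≤ ∫ ω, (ρ * ‖M (θt k ω) - M θstar‖
        + K * Cη * Cσ * ‖ξ (k+1) ω‖) := by
      refine integral_mono_of_nonneg (Filter.Eventually.of_forall fun ω => norm_nonneg _)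
        hgi (Filter.Eventually.of_forall fun ω => hpt k ω)
    have h2 : (∫ ω, (ρ * ‖M (θt k ω) - M θstar‖ + K * Cη * Cσ * ‖ξ (k+1) ω‖))
        = ρ * a k + K * Cη * Cσ * (∫ ω, ‖ξ (k+1) ω‖) := by
      rw [integral_add ((hint k).const_mul ρ) ((hξint (k+1)).const_mul _),
        integral_const_mul, integral_const_mul]
    have h3 : K * Cη * Cσ * (∫ ω, ‖ξ (k+1) ω‖) ≤ C := by
      have := hξ (k+1)
      have hkk : 0 ≤ K * Cη * Cσ := by positivity
      nlinarith
    calc a (k+1) ≤ _ := h1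
      _ = _ := h2
      _ ≤ ρ * a k + C := by linarith
  -- geometric bound
  have hbound : ∀ k, a k ≤ ρ ^ k * a 0 + C / (1 - ρ) := by
    intro k
    induction k with
    | zero => simp; positivity
    | succ n ih =>
        have := hrec n
        have h2 : ρ * a n ≤ ρ * (ρ ^ n * a 0 + C / (1 - ρ)) :=
          mul_le_mul_of_nonneg_left ih (le_of_lt hρ0)
        have h3 : ρ * (C / (1 - ρ)) + C = C / (1 - ρ) := by
          field_simp; ring
        calc a (n+1) ≤ ρ * a n + C := this
          _ ≤ ρ * (ρ ^ n * a 0 + C / (1 - ρ)) + C := by linarith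
          _ = ρ ^ (n+1) * a 0 + (ρ * (C / (1 - ρ)) + C) := by ring
          _ = ρ ^ (n+1) * a 0 + C / (1 - ρ) := by rw [h3]
  -- pass to limsup
  have htend : Tendsto (fun k : ℕ => ρ ^ k * a 0 + C / (1 - ρ)) atTop
      (nhds (C / (1 - ρ))) := by
    have h0 : Tendsto (fun k : ℕ => ρ ^ k * a 0) atTop (nhds 0) := by
      have := tendsto_pow_atTop_nhds_zero_of_lt_one (le_of_lt hρ0) hρ1
      simpa using this.mul_const (a 0)
    simpa using h0.add tendsto_const_nhds
  have hlim : limsup a atTop ≤ limsup (fun k : ℕ => ρ ^ k * a 0 + C / (1 - ρ)) atTop := by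
    exact limsup_le_limsup (Filter.Eventually.of_forall hbound)
      (isCoboundedUnder_le_of_le atTop hanneg) htend.isBoundedUnder_le
  calc limsup a atTop ≤ _ := hlim
    _ = C / (1 - ρ) := htend.limsup_eq
end

section
/- Let (Ω, 𝓕, ℙ) be a probability space, E = ℝ^d, F a real normed vector space, M : ℝ^d → F a map that is Lipschitz with constant K ≥ 0, θ* ∈ ℝ^d, T : ℝ^d → ℝ^d an update map, and ρ ∈ (0,1) a contraction factor such that ‖M(T θ) − M(θ*)‖ ≤ ρ ‖M(θ) − M(θ*)‖ for every θ ∈ ℝ^d. Let η : ℕ → ℝ≥0 with η^(k) ≤ C_η for all k, C_σ ≥ 0, and let ξ^(k) : Ω → ℝ^d be random vectors whose coordinates each satisfy 𝔼[(ξ^(k)_i)²] ≤ σ². Define random sequences θ̃^(k) = θ^(k) + η^(k) · C_σ · ξ^(k) and θ^(k+1) = T(θ̃^(k)), with θ^(0) ∈ ℝ^d deterministic. Then (assuming the relevant norms are integrable) limsup_{k→∞} 𝔼[‖M(θ̃^(k)) − M(θ*)‖] ≤ (K · C_σ · C_η · σ · √d) / (1 − ρ). -/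
open MeasureTheory Filter

lemma my_sq_integral_le {Ω : Type*} [MeasureSpace Ω] [IsProbabilityMeasure (volume : Measure Ω)]
    (f : Ω → ℝ) (hf : Integrable f) (hf2 : Integrable (fun ω => f ω ^ 2)) :
    (∫ ω, f ω) ^ 2 ≤ ∫ ω, f ω ^ 2 := by
  set m := ∫ ω, f ω with hm
  have h0 : 0 ≤ ∫ ω, (f ω - m) ^ 2 := integral_nonneg fun ω => sq_nonneg _
  have hexp : ∫ ω, (f ω - m) ^ 2 = (∫ ω, f ω ^ 2) - m ^ 2 := by
    have heq : (fun ω => (f ω - m) ^ 2)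
        = fun ω => (f ω ^ 2 - (2 * m) * f ω) + m ^ 2 := by
      funext ω; ring
    rw [heq, integral_add (f := fun ω => f ω ^ 2 - 2 * m * f ω) (g := fun _ => m ^ 2)
      (hf2.sub (hf.const_mul (2*m))) (integrable_const (m^2)),
      integral_sub hf2 (hf.const_mul (2*m)), MeasureTheory.integral_const_mul, integral_const]
    simp [← hm]
    ring
  linarith


/-- Convergence Theorem with the explicit noise-norm bound: if the per-coordinate
second moments of the `d`-dimensional noise are at most `σ²`, then
`limsup_{k→∞} 𝔼[‖M (θ̃ k) − M θ*‖] ≤ K Cσ Cη σ √d / (1 − ρ)`. -/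
theorem dp_convergence_limsup_gaussian
    {Ω : Type*} [MeasureSpace Ω] [IsProbabilityMeasure (volume : Measure Ω)]
    {d : ℕ} {F : Type*} [NormedAddCommGroup F] [NormedSpace ℝ F]
    (M : EuclideanSpace ℝ (Fin d) → F) (K : ℝ) (hK : 0 ≤ K)
    (hM : ∀ x y : EuclideanSpace ℝ (Fin d), ‖M x - M y‖ ≤ K * ‖x - y‖)
    (θstar : EuclideanSpace ℝ (Fin d))
    (T : EuclideanSpace ℝ (Fin d) → EuclideanSpace ℝ (Fin d))
    (ρ : ℝ) (hρ0 : 0 < ρ) (hρ1 : ρ < 1)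
    (hT : ∀ θ, ‖M (T θ) - M θstar‖ ≤ ρ * ‖M θ - M θstar‖)
    (η : ℕ → ℝ) (hη : ∀ k, 0 ≤ η k) (Cη : ℝ) (hηC : ∀ k, η k ≤ Cη)
    (Cσ : ℝ) (hCσ : 0 ≤ Cσ)
    (ξ : ℕ → Ω → EuclideanSpace ℝ (Fin d))
    (hξmeas : ∀ k, Measurable (ξ k))
    (hξint : ∀ k, Integrable (fun ω => ‖ξ k ω‖))
    (σ : ℝ) (hσ : 0 ≤ σ)
    (hintsq : ∀ k, ∀ i : Fin d, Integrable (fun ω => (ξ k ω i) ^ 2))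
    (hvar : ∀ k, ∀ i : Fin d, (∫ ω, (ξ k ω i) ^ 2) ≤ σ ^ 2)
    (θ0 : EuclideanSpace ℝ (Fin d))
    (θ θt : ℕ → Ω → EuclideanSpace ℝ (Fin d))
    (hθ0 : ∀ ω, θ 0 ω = θ0)
    (hnoisy : ∀ k ω, θt k ω = θ k ω + (η k * Cσ) • ξ k ω)
    (hupdate : ∀ k ω, θ (k + 1) ω = T (θt k ω))
    (hint : ∀ k, Integrable (fun ω => ‖M (θt k ω) - M θstar‖)) :
    Filter.limsup (fun k : ℕ => ∫ ω, ‖M (θt k ω) - M θstar‖) atTop ≤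
      K * Cσ * Cη * σ * Real.sqrt d / (1 - ρ) := by
  have hCη : 0 ≤ Cη := le_trans (hη 0) (hηC 0)
  set a : ℕ → ℝ := fun k => ∫ ω, ‖M (θt k ω) - M θstar‖ with ha
  set B : ℝ := K * Cσ * Cη * σ * Real.sqrt d with hB
  have hBnn : 0 ≤ B := by positivity
  have hρd : (0:ℝ) < 1 - ρ := by linarith
  set D : ℝ := B / (1 - ρ) with hD
  have hDnn : 0 ≤ D := div_nonneg hBnn hρd.le
  -- bound on E‖ξ k‖
  have hξbound : ∀ k, ∫ ω, ‖ξ k ω‖ ≤ σ * Real.sqrt d := by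
    intro k
    have hnormsq : ∀ ω, ‖ξ k ω‖ ^ 2 = ∑ i, (ξ k ω i) ^ 2 := by
      intro ω
      rw [EuclideanSpace.norm_eq, Real.sq_sqrt (Finset.sum_nonneg fun i _ => sq_nonneg _)]
      simp [Real.norm_eq_abs, sq_abs]
    have hintsq' : Integrable (fun ω => ‖ξ k ω‖ ^ 2) := by
      have : Integrable (fun ω => ∑ i, (ξ k ω i) ^ 2) :=
        integrable_finset_sum _ fun i _ => hintsq k i
      exact this.congr (Eventually.of_forall fun ω => (hnormsq ω).symm)
    have h1 : (∫ ω, ‖ξ k ω‖) ^ 2 ≤ ∫ ω, ‖ξ k ω‖ ^ 2 :=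
      my_sq_integral_le _ (hξint k) hintsq'
    have h2 : ∫ ω, ‖ξ k ω‖ ^ 2 ≤ d * σ ^ 2 := by
      calc ∫ ω, ‖ξ k ω‖ ^ 2 = ∑ i, ∫ ω, (ξ k ω i) ^ 2 := by
            rw [← integral_finset_sum _ fun i _ => hintsq k i]
            exact integral_congr_ae (Eventually.of_forall hnormsq)
        _ ≤ ∑ _i : Fin d, σ ^ 2 := Finset.sum_le_sum fun i _ => hvar k i
        _ = d * σ ^ 2 := by simp [Finset.sum_const, mul_comm]
    have hle : (∫ ω, ‖ξ k ω‖) ^ 2 ≤ (σ * Real.sqrt d) ^ 2 := by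
      have : (σ * Real.sqrt d) ^ 2 = d * σ ^ 2 := by
        rw [mul_pow, Real.sq_sqrt (Nat.cast_nonneg d)]; ring
      rw [this]; exact h1.trans h2
    have hnn : 0 ≤ ∫ ω, ‖ξ k ω‖ := integral_nonneg fun ω => norm_nonneg _
    have hnn2 : 0 ≤ σ * Real.sqrt d := by positivity
    nlinarith
  -- recurrence
  have key : ∀ k, a (k + 1) ≤ ρ * a k + B := by
    intro k
    have hpt : ∀ ω, ‖M (θt (k+1) ω) - M θstar‖ ≤
        ρ * ‖M (θt k ω) - M θstar‖ + (K * Cσ * Cη) * ‖ξ (k+1) ω‖ := by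
      intro ω
      have htri : ‖M (θt (k+1) ω) - M θstar‖ ≤
          ‖M (θt (k+1) ω) - M (θ (k+1) ω)‖ + ‖M (θ (k+1) ω) - M θstar‖ :=
        norm_sub_le_norm_sub_add_norm_sub _ _ _
      have hdiff : θt (k+1) ω - θ (k+1) ω = (η (k+1) * Cσ) • ξ (k+1) ω := by
        rw [hnoisy (k+1) ω]; exact add_sub_cancel_left _ _
      have h1 : ‖M (θt (k+1) ω) - M (θ (k+1) ω)‖ ≤ K * (η (k+1) * Cσ * ‖ξ (k+1) ω‖) := by
        have := hM (θt (k+1) ω) (θ (k+1) ω)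
        rwa [hdiff, norm_smul, Real.norm_eq_abs, abs_mul,
          abs_of_nonneg (hη (k+1)), abs_of_nonneg hCσ] at this
      have h2 : ‖M (θ (k+1) ω) - M θstar‖ ≤ ρ * ‖M (θt k ω) - M θstar‖ := by
        rw [hupdate k ω]; exact hT _
      have h3 : K * (η (k+1) * Cσ * ‖ξ (k+1) ω‖) ≤ (K * Cσ * Cη) * ‖ξ (k+1) ω‖ :=
        calc K * (η (k+1) * Cσ * ‖ξ (k+1) ω‖) = (K * Cσ * ‖ξ (k+1) ω‖) * η (k+1) := by ring
          _ ≤ (K * Cσ * ‖ξ (k+1) ω‖) * Cη := mul_le_mul_of_nonneg_left (hηC _) (by positivity)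
          _ = (K * Cσ * Cη) * ‖ξ (k+1) ω‖ := by ring
      linarith
    have hint2 : Integrable (fun ω =>
        ρ * ‖M (θt k ω) - M θstar‖ + (K * Cσ * Cη) * ‖ξ (k+1) ω‖) :=
      ((hint k).const_mul ρ).add ((hξint (k+1)).const_mul _)
    calc a (k+1) ≤ ∫ ω, (ρ * ‖M (θt k ω) - M θstar‖ + (K * Cσ * Cη) * ‖ξ (k+1) ω‖) :=
          integral_mono (hint (k+1)) hint2 hpt
      _ = ρ * a k + (K * Cσ * Cη) * ∫ ω, ‖ξ (k+1) ω‖ := by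
          rw [integral_add ((hint k).const_mul ρ) ((hξint (k+1)).const_mul _),
            MeasureTheory.integral_const_mul, MeasureTheory.integral_const_mul]
      _ ≤ ρ * a k + B := by
          have h4 : (K * Cσ * Cη) * ∫ ω, ‖ξ (k+1) ω‖ ≤ (K * Cσ * Cη) * (σ * Real.sqrt d) :=
            mul_le_mul_of_nonneg_left (hξbound (k+1)) (by positivity)
          have : (K * Cσ * Cη) * (σ * Real.sqrt d) = B := by rw [hB]; ring
          linarith
  -- geometric bound
  have claim : ∀ k, a k ≤ ρ ^ k * a 0 + D := by
    intro k
    induction k with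
    | zero => simp; linarith [hDnn]
    | succ n ih =>
      have h1 : a (n+1) ≤ ρ * a n + B := key n
      have h2 : ρ * a n + B ≤ ρ * (ρ ^ n * a 0 + D) + B :=
        by nlinarith
      have h3 : ρ * D + B = D := by
        rw [hD]; field_simp; ring
      calc a (n+1) ≤ ρ * (ρ ^ n * a 0 + D) + B := h1.trans h2
        _ = ρ ^ (n+1) * a 0 + (ρ * D + B) := by ring
        _ = ρ ^ (n+1) * a 0 + D := by rw [h3]
  -- limsup
  have hv : Tendsto (fun k : ℕ => ρ ^ k * a 0 + D) atTop (nhds (0 * a 0 + D)) :=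
    ((tendsto_pow_atTop_nhds_zero_of_lt_one hρ0.le hρ1).mul_const _).add_const _
  rw [zero_mul, zero_add] at hv
  have hbound : IsBoundedUnder (· ≤ ·) atTop (fun k : ℕ => ρ ^ k * a 0 + D) :=
    hv.isBoundedUnder_le
  have hcob : IsCoboundedUnder (· ≤ ·) atTop a :=
    (isBoundedUnder_of ⟨0, fun k => integral_nonneg fun ω => norm_nonneg _⟩ :
      IsBoundedUnder (· ≥ ·) atTop a).isCoboundedUnder_le
  calc limsup a atTop ≤ limsup (fun k : ℕ => ρ ^ k * a 0 + D) atTop :=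
        limsup_le_limsup (Eventually.of_forall claim) hcob hbound
    _ = D := hv.limsup_eq
end
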